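/- arXiv:1505.02154 — 4 statements merged into one kernel-verified Lean document; each statement's English description precedes it below -/
import Mathlib

section
/- For every x = (x_i)_{i∈D} with x_i ≥ 0 for all i and ‖x‖_σ < ∞, every real p ≥ 1, and every subset D′ ⊆ D, one has Σ_{i∈D′} σ_i (Σ_{j∈D} m(i,j) x_j)^p ≤ c · Σ_{i∈D} σ_i x_i^p (as an inequality in [0,∞]). -/
/-!
Jensen's inequality for the probability weights `m(i, ·)` gives
`(∑ⱼ m(i,j) xⱼ)^p ≤ ∑ⱼ m(i,j) xⱼ^p` for every row `i`. Multiplying by `σᵢ`, summing over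
all of `D` and exchanging the two sums, the weight of `xⱼ^p` becomes `∑ᵢ σᵢ m(i,j) ≤ c σⱼ`.
In `[0,∞]` all sums are unconditional, so restricting to `D'` and the exchange are free.
-/

open scoped ENNReal

namespace ENNReal

variable {ι κ : Type*}

theorem rpow_sum_mul_le_sum_mul_rpow_of_sum_le_one (s : Finset ι) {w : ι → ℝ≥0∞}
    (z : ι → ℝ≥0∞) (hw : ∑ i ∈ s, w i ≤ 1) {p : ℝ} (hp : 1 ≤ p) :
    (∑ i ∈ s, w i * z i) ^ p ≤ ∑ i ∈ s, w i * z i ^ p := by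
  -- The missing mass `1 - ∑ w` is put on an extra point where `z` vanishes.
  have h := rpow_arith_mean_le_arith_mean_rpow s.insertNone
    (fun o => o.elim (1 - ∑ i ∈ s, w i) w) (fun o => o.elim 0 z)
    (by simpa [Finset.sum_insertNone] using tsub_add_cancel_of_le hw) hp
  simpa [Finset.sum_insertNone, zero_rpow_of_pos (zero_lt_one.trans_le hp)] using h

theorem rpow_tsum_mul_le_tsum_mul_rpow {w : ι → ℝ≥0∞} (z : ι → ℝ≥0∞)
    (hw : ∑' i, w i ≤ 1) {p : ℝ} (hp : 1 ≤ p) :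
    (∑' i, w i * z i) ^ p ≤ ∑' i, w i * z i ^ p := by
  have hp0 : 0 < p := zero_lt_one.trans_le hp
  rw [← le_rpow_inv_iff hp0]
  refine tsum_le_of_sum_le' zero_le fun s => (le_rpow_inv_iff hp0).2 ?_
  calc (∑ i ∈ s, w i * z i) ^ p ≤ ∑ i ∈ s, w i * z i ^ p :=
        rpow_sum_mul_le_sum_mul_rpow_of_sum_le_one s z ((ENNReal.sum_le_tsum s).trans hw) hp
    _ ≤ ∑' i, w i * z i ^ p := ENNReal.sum_le_tsum s

theorem tsum_mul_tsum_mul_eq (a : ι → ℝ≥0∞) (M : ι → κ → ℝ≥0∞) (y : κ → ℝ≥0∞) :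
    ∑' i, a i * ∑' j, M i j * y j = ∑' j, (∑' i, a i * M i j) * y j := by
  simp_rw [← ENNReal.tsum_mul_left, ← ENNReal.tsum_mul_right, mul_assoc]
  exact ENNReal.tsum_comm

theorem tsum_ofReal_eq_one {f : ι → ℝ} (hf : ∀ i, 0 ≤ f i) (h : ∑' i, f i = 1) :
    ∑' i, ENNReal.ofReal (f i) = 1 := by
  have hsum : Summable f := by
    by_contra hns
    simp [tsum_eq_zero_of_not_summable hns] at h
  rw [← ofReal_tsum_of_nonneg hf hsum, h, ofReal_one]

theorem tsum_ofReal_mul_ofReal_le {a b : ι → ℝ} (ha : ∀ i, 0 ≤ a i) (ha' : Summable a)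
    (hb : ∀ i, 0 ≤ b i) (hb1 : ∀ i, b i ≤ 1) {C : ℝ} (h : ∑' i, a i * b i ≤ C) :
    ∑' i, ENNReal.ofReal (a i) * ENNReal.ofReal (b i) ≤ ENNReal.ofReal C := by
  have hab : ∀ i, 0 ≤ a i * b i := fun i => mul_nonneg (ha i) (hb i)
  have hsum : Summable fun i => a i * b i :=
    ha'.of_nonneg_of_le hab fun i => mul_le_of_le_one_right (ha i) (hb1 i)
  simp_rw [← ofReal_mul (ha _)]
  rw [← ofReal_tsum_of_nonneg hab hsum]
  exact ofReal_le_ofReal h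

end ENNReal

theorem stmt_4_general {D : Type*}
    (σ : D → ℝ) (hσ : ∀ i, 0 < σ i) (hσsum : Summable σ)
    (m : D → D → ℝ) (hm : ∀ i j, 0 ≤ m i j)
    (hrow : ∀ i, ∑' k, m i k = 1)
    (c : ℝ) (hcσ : ∀ j, ∑' i, σ i * m i j ≤ c * σ j)
    (x : D → ℝ)
    (p : ℝ) (hp : 1 ≤ p) (S : Set D) :
    ∑' i : S, ENNReal.ofReal (σ i.val) *
        (∑' j, ENNReal.ofReal (m i.val j) * ENNReal.ofReal (x j)) ^ p
      ≤ ENNReal.ofReal c * ∑' i, ENNReal.ofReal (σ i) * ENNReal.ofReal (x i) ^ p := by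
  have hrow' (i : D) : ∑' j, ENNReal.ofReal (m i j) = 1 :=
    ENNReal.tsum_ofReal_eq_one (hm i) (hrow i)
  have hm_le_one (i j : D) : m i j ≤ 1 :=
    ENNReal.ofReal_le_one.1 ((ENNReal.le_tsum j).trans (hrow' i).le)
  have hcol_le (j : D) : ∑' i, ENNReal.ofReal (σ i) * ENNReal.ofReal (m i j) ≤
      ENNReal.ofReal c * ENNReal.ofReal (σ j) := by
    rw [← ENNReal.ofReal_mul' (hσ j).le]
    exact ENNReal.tsum_ofReal_mul_ofReal_le (fun i => (hσ i).le) hσsum (fun i => hm i j)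
      (fun i => hm_le_one i j) (hcσ j)
  calc _ ≤ ∑' i, ENNReal.ofReal (σ i) *
          (∑' j, ENNReal.ofReal (m i j) * ENNReal.ofReal (x j)) ^ p :=
        ENNReal.tsum_comp_le_tsum_of_injective Subtype.val_injective _
    _ ≤ ∑' i, ENNReal.ofReal (σ i) *
          ∑' j, ENNReal.ofReal (m i j) * ENNReal.ofReal (x j) ^ p :=
        ENNReal.tsum_le_tsum fun i => mul_le_mul_right
          (ENNReal.rpow_tsum_mul_le_tsum_mul_rpow _ (hrow' i).le hp) _
    _ = ∑' j, (∑' i, ENNReal.ofReal (σ i) * ENNReal.ofReal (m i j)) *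
          ENNReal.ofReal (x j) ^ p :=
        ENNReal.tsum_mul_tsum_mul_eq _ _ _
    _ ≤ ∑' j, ENNReal.ofReal c * ENNReal.ofReal (σ j) * ENNReal.ofReal (x j) ^ p :=
        ENNReal.tsum_le_tsum fun j => mul_le_mul_left (hcol_le j) _
    _ = _ := by simp_rw [mul_assoc]; exact ENNReal.tsum_mul_left

/-- Weighted `p`-th moment estimate for migration averages (Lemma on
`∑_{i∈D'} σ_i (∑_j m(i,j) x_j)^p ≤ c ∑_i σ_i x_i^p`, as an inequality in `[0,∞]`). -/
theorem stmt_4 {D : Type*} [Countable D]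
    (σ : D → ℝ) (hσ : ∀ i, 0 < σ i) (hσsum : Summable σ)
    (m : D → D → ℝ) (hm : ∀ i j, 0 ≤ m i j)
    (hrow : ∀ i, ∑' k, m i k = 1) (hcol : ∀ i, ∑' k, m k i = 1)
    (c : ℝ) (hc : 0 < c) (hcσ : ∀ j, ∑' i, σ i * m i j ≤ c * σ j)
    (x : D → ℝ) (hx : ∀ i, 0 ≤ x i) (hxσ : Summable fun i => σ i * x i)
    (p : ℝ) (hp : 1 ≤ p) (S : Set D) :
    ∑' i : S, ENNReal.ofReal (σ i.val) *
        (∑' j, ENNReal.ofReal (m i.val j) * ENNReal.ofReal (x j)) ^ p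
      ≤ ENNReal.ofReal c * ∑' i, ENNReal.ofReal (σ i) * ENNReal.ofReal (x i) ^ p :=
  stmt_4_general σ hσ hσsum m hm hrow c hcσ x p hp S
end

section
/- For every t ∈ [0,∞) and every h = (h_j)_{j∈D} ∈ [0,∞)^D, one has Σ_{i∈D} σ_i Σ_{j∈D} m_t(i,j) h_j ≤ e^{t(c−1)} Σ_{j∈D} σ_j h_j (as an inequality in [0,∞]), where m_t(i,j) := Σ_{n=0}^∞ e^{−t} (t^n/n!) m^n(i,j). -/
/-!
All sums may be interchanged freely once everything is moved to `[0,∞]`. The column condition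
says that `σ` is `c`-subinvariant for `m`, so by induction `∑_i σ_i m^n(i,j) ≤ c^n σ_j`; summing
against the Poisson weights `e^{-t} t^n / n!` then yields `e^{-t} e^{tc} = e^{t(c-1)}`.
-/

open ENNReal

theorem ENNReal.ofReal_tsum_mul_le {ι : Type*} {f g : ι → ℝ} (hf : ∀ i, 0 ≤ f i)
    (hg : ∀ i, 0 ≤ g i) :
    ENNReal.ofReal (∑' i, f i * g i) ≤ ∑' i, ENNReal.ofReal (f i) * ENNReal.ofReal (g i) := by
  simp_rw [← ENNReal.ofReal_mul (hf _)]
  by_cases hs : Summable fun i => f i * g i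
  · rw [ENNReal.ofReal_tsum_of_nonneg (fun i => mul_nonneg (hf i) (hg i)) hs]
  · simp [tsum_eq_zero_of_not_summable hs]

theorem le_one_of_tsum_eq_one {ι : Type*} {f : ι → ℝ} (hf : ∀ i, 0 ≤ f i) (h : ∑' i, f i = 1)
    (i : ι) : f i ≤ 1 := by
  have hs : Summable f := by
    by_contra hs
    simp [tsum_eq_zero_of_not_summable hs] at h
  exact h ▸ hs.le_tsum i fun j _ => hf j

theorem ENNReal.tsum_ofReal_mul_ofReal_of_le_one {ι : Type*} {f g : ι → ℝ} (hf : ∀ i, 0 ≤ f i)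
    (hfs : Summable f) (hg : ∀ i, 0 ≤ g i) (hg1 : ∀ i, g i ≤ 1) :
    ∑' i, ENNReal.ofReal (f i) * ENNReal.ofReal (g i) = ENNReal.ofReal (∑' i, f i * g i) := by
  have hfgs : Summable fun i => f i * g i :=
    hfs.of_nonneg_of_le (fun i => mul_nonneg (hf i) (hg i))
      fun i => mul_le_of_le_one_right (hf i) (hg1 i)
  rw [ENNReal.ofReal_tsum_of_nonneg (fun i => mul_nonneg (hf i) (hg i)) hfgs]
  exact tsum_congr fun i => (ENNReal.ofReal_mul (hf i)).symm

theorem Real.hasSum_poisson_mul_pow (t c : ℝ) :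
    HasSum (fun n : ℕ => Real.exp (-t) * t ^ n / n.factorial * c ^ n) (Real.exp (t * (c - 1))) := by
  have hexp : HasSum (fun n : ℕ => (t * c) ^ n / n.factorial) (Real.exp (t * c)) := by
    rw [Real.exp_eq_exp_ℝ]
    exact NormedSpace.expSeries_div_hasSum_exp (t * c)
  have hterm : (fun n : ℕ => Real.exp (-t) * t ^ n / n.factorial * c ^ n) =
      fun n => Real.exp (-t) * ((t * c) ^ n / n.factorial) := by
    funext n
    rw [mul_pow]
    ring
  rw [hterm, show t * (c - 1) = -t + t * c by ring, Real.exp_add]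
  exact hexp.mul_left _

theorem ENNReal.tsum_poisson_mul_pow {t c : ℝ} (ht : 0 ≤ t) (hc : 0 ≤ c) :
    ∑' n : ℕ, ENNReal.ofReal (Real.exp (-t) * t ^ n / n.factorial) * ENNReal.ofReal c ^ n =
      ENNReal.ofReal (Real.exp (t * (c - 1))) := by
  rw [← (Real.hasSum_poisson_mul_pow t c).tsum_eq, ENNReal.ofReal_tsum_of_nonneg
    (fun n => by positivity) (Real.hasSum_poisson_mul_pow t c).summable]
  refine tsum_congr fun n => ?_
  rw [← ENNReal.ofReal_pow hc, ← ENNReal.ofReal_mul (by positivity)]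

section SubinvariantWeight

variable {D : Type*} {s : D → ℝ≥0∞}

theorem tsum_mul_comp_le {P M Q : D → D → ℝ≥0∞} {a b : ℝ≥0∞}
    (hP : ∀ j, ∑' i, s i * P i j ≤ a * s j) (hM : ∀ j, ∑' i, s i * M i j ≤ b * s j)
    (hQ : ∀ i j, Q i j ≤ ∑' k, P i k * M k j) (j : D) :
    ∑' i, s i * Q i j ≤ a * b * s j :=
  calc ∑' i, s i * Q i j
      ≤ ∑' i, s i * ∑' k, P i k * M k j := by gcongr with i; exact hQ i j
    _ = ∑' k, (∑' i, s i * P i k) * M k j := by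
      simp_rw [← ENNReal.tsum_mul_left, ← ENNReal.tsum_mul_right, mul_assoc]
      exact ENNReal.tsum_comm
    _ ≤ ∑' k, a * s k * M k j := by gcongr with k; exact hP k
    _ = a * ∑' k, s k * M k j := by simp_rw [← ENNReal.tsum_mul_left, mul_assoc]
    _ ≤ a * (b * s j) := by gcongr; exact hM j
    _ = a * b * s j := (mul_assoc _ _ _).symm

theorem tsum_mul_iterate_le [DecidableEq D] {M : D → D → ℝ≥0∞} {C : ℝ≥0∞}
    {P : ℕ → D → D → ℝ≥0∞} (hM : ∀ j, ∑' i, s i * M i j ≤ C * s j)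
    (hP0 : ∀ i j, P 0 i j ≤ if i = j then 1 else 0)
    (hPS : ∀ n i j, P (n + 1) i j ≤ ∑' k, P n i k * M k j) (n : ℕ) (j : D) :
    ∑' i, s i * P n i j ≤ C ^ n * s j := by
  induction n generalizing j with
  | zero =>
    calc ∑' i, s i * P 0 i j
        ≤ ∑' i, s i * (if i = j then 1 else 0) := by gcongr with i; exact hP0 i j
      _ = C ^ 0 * s j := by simp [mul_ite]
  | succ n ih => rw [pow_succ]; exact tsum_mul_comp_le ih hM (hPS n) j

theorem tsum_mul_tsum_tsum_mul_le {h : D → ℝ≥0∞} {C : ℝ≥0∞} (a : ℕ → ℝ≥0∞)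
    {P : ℕ → D → D → ℝ≥0∞} (hP : ∀ n j, ∑' i, s i * P n i j ≤ C ^ n * s j) :
    ∑' i, s i * ∑' j, (∑' n, a n * P n i j) * h j ≤
      (∑' n, a n * C ^ n) * ∑' j, s j * h j :=
  calc ∑' i, s i * ∑' j, (∑' n, a n * P n i j) * h j
      = ∑' i, ∑' j, ∑' n, a n * (s i * P n i j * h j) := by
        refine tsum_congr fun i => ?_
        rw [← ENNReal.tsum_mul_left]
        refine tsum_congr fun j => ?_
        rw [← ENNReal.tsum_mul_right, ← ENNReal.tsum_mul_left]
        exact tsum_congr fun n => by ring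
    _ = ∑' n, ∑' j, ∑' i, a n * (s i * P n i j * h j) := by
        rw [ENNReal.tsum_comm]
        simp_rw [ENNReal.tsum_comm (α := D) (β := ℕ)]
    _ = ∑' n, a n * ∑' j, (∑' i, s i * P n i j) * h j := by
        refine tsum_congr fun n => ?_
        rw [← ENNReal.tsum_mul_left]
        refine tsum_congr fun j => ?_
        rw [← ENNReal.tsum_mul_right, ← ENNReal.tsum_mul_left]
    _ ≤ ∑' n, a n * ∑' j, C ^ n * s j * h j := by gcongr with n j; exact hP n j
    _ = (∑' n, a n * C ^ n) * ∑' j, s j * h j := by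
        rw [← ENNReal.tsum_mul_right]
        refine tsum_congr fun n => ?_
        simp_rw [mul_assoc, ← ENNReal.tsum_mul_left]

end SubinvariantWeight

theorem mpow_nonneg {D : Type*} [DecidableEq D] {m : D → D → ℝ} (hm : ∀ i j, 0 ≤ m i j)
    {mpow : ℕ → D → D → ℝ} (hmpow0 : ∀ i j, mpow 0 i j = if i = j then 1 else 0)
    (hmpowS : ∀ n i j, mpow (n + 1) i j = ∑' k, mpow n i k * m k j) (n : ℕ) (i j : D) :
    0 ≤ mpow n i j := by
  induction n generalizing j with
  | zero => rw [hmpow0]; positivity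
  | succ n ih => rw [hmpowS]; exact tsum_nonneg fun k => mul_nonneg (ih k) (hm k j)

theorem stmt_8_general {D : Type*} [DecidableEq D]
    (σ : D → ℝ) (hσ : ∀ i, 0 < σ i) (hσsum : Summable σ)
    (m : D → D → ℝ) (hm : ∀ i j, 0 ≤ m i j)
    (hcol : ∀ i, ∑' k, m k i = 1)
    (c : ℝ) (hc : 0 < c) (hcσ : ∀ j, ∑' i, σ i * m i j ≤ c * σ j)
    (mpow : ℕ → D → D → ℝ)
    (hmpow0 : ∀ i j, mpow 0 i j = if i = j then 1 else 0)
    (hmpowS : ∀ n i j, mpow (n + 1) i j = ∑' k, mpow n i k * m k j)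
    (t : ℝ) (ht : 0 ≤ t) (h : D → ℝ) :
    ∑' i, ENNReal.ofReal (σ i) *
        ∑' j, ENNReal.ofReal (∑' n : ℕ, Real.exp (-t) * t ^ n / (n.factorial : ℝ) * mpow n i j) *
          ENNReal.ofReal (h j)
      ≤ ENNReal.ofReal (Real.exp (t * (c - 1))) *
          ∑' j, ENNReal.ofReal (σ j) * ENNReal.ofReal (h j) := by
  have hpow := mpow_nonneg hm hmpow0 hmpowS
  have hsubinv : ∀ j, ∑' i, ENNReal.ofReal (σ i) * ENNReal.ofReal (m i j) ≤
      ENNReal.ofReal c * ENNReal.ofReal (σ j) := fun j => by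
    rw [ENNReal.tsum_ofReal_mul_ofReal_of_le_one (fun i => (hσ i).le) hσsum (hm · j)
      (le_one_of_tsum_eq_one (hm · j) (hcol j)), ← ENNReal.ofReal_mul hc.le]
    exact ENNReal.ofReal_le_ofReal (hcσ j)
  have hpow0 : ∀ i j, ENNReal.ofReal (mpow 0 i j) ≤ if i = j then 1 else 0 := fun i j => by
    rw [hmpow0]; split_ifs <;> simp
  have hpowS : ∀ n i j, ENNReal.ofReal (mpow (n + 1) i j) ≤
      ∑' k, ENNReal.ofReal (mpow n i k) * ENNReal.ofReal (m k j) := fun n i j =>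
    hmpowS n i j ▸ ENNReal.ofReal_tsum_mul_le (hpow n i) (hm · j)
  calc _ ≤ ∑' i, ENNReal.ofReal (σ i) * ∑' j, (∑' n : ℕ,
          ENNReal.ofReal (Real.exp (-t) * t ^ n / n.factorial) * ENNReal.ofReal (mpow n i j)) *
            ENNReal.ofReal (h j) := by
        gcongr with i j
        exact ENNReal.ofReal_tsum_mul_le (fun n => by positivity) (hpow · i j)
    _ ≤ _ := tsum_mul_tsum_tsum_mul_le _ (tsum_mul_iterate_le hsubinv hpow0 hpowS)
    _ = _ := by rw [ENNReal.tsum_poisson_mul_pow ht hc.le]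

/-- Weighted bound for the semigroup `m_t`: for `h ≥ 0`,
`∑_i σ_i ∑_j m_t(i,j) h_j ≤ e^{t(c-1)} ∑_j σ_j h_j` in `[0,∞]`. -/
theorem stmt_8 {D : Type*} [Countable D] [DecidableEq D]
    (σ : D → ℝ) (hσ : ∀ i, 0 < σ i) (hσsum : Summable σ)
    (m : D → D → ℝ) (hm : ∀ i j, 0 ≤ m i j)
    (hrow : ∀ i, ∑' k, m i k = 1) (hcol : ∀ i, ∑' k, m k i = 1)
    (c : ℝ) (hc : 0 < c) (hcσ : ∀ j, ∑' i, σ i * m i j ≤ c * σ j)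
    (mpow : ℕ → D → D → ℝ)
    (hmpow0 : ∀ i j, mpow 0 i j = if i = j then 1 else 0)
    (hmpowS : ∀ n i j, mpow (n + 1) i j = ∑' k, mpow n i k * m k j)
    (t : ℝ) (ht : 0 ≤ t) (h : D → ℝ) (hh : ∀ j, 0 ≤ h j) :
    ∑' i, ENNReal.ofReal (σ i) *
        ∑' j, ENNReal.ofReal (∑' n : ℕ, Real.exp (-t) * t ^ n / (n.factorial : ℝ) * mpow n i j) *
          ENNReal.ofReal (h j)
      ≤ ENNReal.ofReal (Real.exp (t * (c - 1))) *
          ∑' j, ENNReal.ofReal (σ j) * ENNReal.ofReal (h j) :=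
  stmt_8_general σ hσ hσsum m hm hcol c hc hcσ mpow hmpow0 hmpowS t ht h
end

section
/- Set u := (2κ/β)(aθ − 1) and v := (2κ/β)(1 − θ(a−1)) (both strictly positive). Then ∫_0^1 z^{u−1} (1−z)^{v−1} (a−z) ( 1/(a−z) − θ ) dz = 0. -/
/-!
Write `c = 2κ/β`, so that `u = c(aθ - 1)` and `v = c(1 - θ(a - 1))`. Since
`(a - z)(1/(a - z) - θ) = 1 - θ(a - z)` and `u(1 - z) - vz = -c(1 - θ(a - z))`, the integrand is
`-1/c` times the derivative of `z^u (1 - z)^v`, which vanishes at both endpoints.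
-/

open MeasureTheory Set

theorem intervalIntegrable_rpow_mul_one_sub_rpow {u v : ℝ} (hu : 0 < u) (hv : 0 < v) :
    IntervalIntegrable (fun z : ℝ => z ^ (u - 1) * (1 - z) ^ (v - 1)) volume 0 1 := by
  have near_zero : ∀ p q : ℝ, -1 < p →
      IntervalIntegrable (fun z : ℝ => z ^ p * (1 - z) ^ q) volume 0 (1 / 2) := by
    intro p q hp
    refine (intervalIntegral.intervalIntegrable_rpow' hp).mul_continuousOn fun z hz => ?_
    rw [uIcc_of_le (by norm_num)] at hz
    exact (ContinuousAt.rpow_const (f := fun z => 1 - z) (by fun_prop)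
      (Or.inl (sub_pos.mpr (by linarith [hz.2])).ne')).continuousWithinAt
  have near_one : IntervalIntegrable (fun z : ℝ => z ^ (u - 1) * (1 - z) ^ (v - 1))
      volume (1 / 2) 1 := by
    have h := ((near_zero (v - 1) (u - 1) (by linarith)).comp_sub_left 1).symm
    norm_num at h
    exact h.congr fun z _ => mul_comm _ _
  exact (near_zero (u - 1) (v - 1) (by linarith)).trans near_one

theorem hasDerivAt_rpow_mul_one_sub_rpow (u v : ℝ) {z : ℝ} (hz : z ∈ Ioo (0 : ℝ) 1) :
    HasDerivAt (fun z : ℝ => z ^ u * (1 - z) ^ v)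
      (z ^ (u - 1) * (1 - z) ^ (v - 1) * (u * (1 - z) - v * z)) z := by
  have hz0 : z ≠ 0 := hz.1.ne'
  have hz1 : 1 - z ≠ 0 := sub_ne_zero.mpr hz.2.ne'
  have d_left : HasDerivAt (fun z : ℝ => z ^ u) (u * z ^ (u - 1)) z :=
    Real.hasDerivAt_rpow_const (Or.inl hz0)
  have d_right : HasDerivAt (fun z : ℝ => (1 - z) ^ v) (v * (1 - z) ^ (v - 1) * -1) z :=
    (Real.hasDerivAt_rpow_const (Or.inl hz1)).comp z ((hasDerivAt_id z).const_sub 1)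
  refine (d_left.mul d_right).congr_deriv ?_
  have split_pow : ∀ {x : ℝ}, x ≠ 0 → ∀ y : ℝ, x ^ y = x ^ (y - 1) * x := fun hx y => by
    rw [← Real.rpow_add_one hx, sub_add_cancel]
  rw [split_pow hz0 u, split_pow hz1 v]
  ring

theorem integral_rpow_mul_one_sub_rpow_mul_eq_zero {u v : ℝ} (hu : 0 < u) (hv : 0 < v) :
    ∫ z in Ioo (0 : ℝ) 1, z ^ (u - 1) * (1 - z) ^ (v - 1) * (u * (1 - z) - v * z) = 0 := by
  have hint : IntervalIntegrable
      (fun z : ℝ => z ^ (u - 1) * (1 - z) ^ (v - 1) * (u * (1 - z) - v * z)) volume 0 1 :=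
    (intervalIntegrable_rpow_mul_one_sub_rpow hu hv).mul_continuousOn (by fun_prop)
  have hcont : ContinuousOn (fun z : ℝ => z ^ u * (1 - z) ^ v) (Icc 0 1) :=
    ((Real.continuous_rpow_const hu.le).mul
      ((Real.continuous_rpow_const hv.le).comp (continuous_const.sub continuous_id))).continuousOn
  rw [← integral_Ioc_eq_integral_Ioo, ← intervalIntegral.integral_of_le zero_le_one,
    intervalIntegral.integral_eq_sub_of_hasDerivAt_of_le zero_le_one hcont
      (fun z hz => hasDerivAt_rpow_mul_one_sub_rpow u v hz) hint]
  simp [Real.zero_rpow hu.ne', Real.zero_rpow hv.ne']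

/-- With `u := (2κ/β)(aθ-1) > 0` and `v := (2κ/β)(1-θ(a-1)) > 0`, the integral
`∫_0^1 z^{u-1} (1-z)^{v-1} (a-z)(1/(a-z) - θ) dz` vanishes. -/
theorem stmt_11 (κ β : ℝ) (hκ : 0 < κ) (hβ : 0 < β) (a : ℝ) (ha : 1 < a)
    (θ : ℝ) (hθ : θ ∈ Set.Ioo (1 / a) (1 / (a - 1))) :
    let u := (2 * κ / β) * (a * θ - 1)
    let v := (2 * κ / β) * (1 - θ * (a - 1))
    0 < u ∧ 0 < v ∧
    ∫ z in Set.Ioo (0 : ℝ) 1,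
        z ^ (u - 1) * (1 - z) ^ (v - 1) * (a - z) * (1 / (a - z) - θ) = 0 := by
  intro u v
  obtain ⟨hθ_lo, hθ_hi⟩ := hθ
  have hc : 0 < 2 * κ / β := by positivity
  have hu : 0 < u := mul_pos hc (by rw [div_lt_iff₀ (by linarith)] at hθ_lo; linarith)
  have hv : 0 < v := mul_pos hc (by rw [lt_div_iff₀ (by linarith)] at hθ_hi; linarith)
  refine ⟨hu, hv, ?_⟩
  have integrand_eq : EqOn
      (fun z : ℝ => z ^ (u - 1) * (1 - z) ^ (v - 1) * (a - z) * (1 / (a - z) - θ))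
      (fun z => -(2 * κ / β)⁻¹ * (z ^ (u - 1) * (1 - z) ^ (v - 1) * (u * (1 - z) - v * z)))
      (Ioo 0 1) := fun z hz => by
    have haz : a - z ≠ 0 := by linarith [hz.2]
    simp only [u, v]
    field_simp
    ring
  rw [setIntegral_congr_fun measurableSet_Ioo integrand_eq, integral_const_mul,
    integral_rpow_mul_one_sub_rpow_mul_eq_zero hu hv, mul_zero]
end

section
/- Let c_θ := ∫_0^1 m_θ(z) dz. Then the normalized integral (1/c_θ) ∫_0^1 (1/(a−z)) m_θ(z) dz is strictly less than θ if α > β, equal to θ if α = β, and strictly greater than θ if α < β. -/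
/-!
Integrate by parts. With `m = speedDensity a p q r`, the function `z^p (1-z)^q (a-z)^(r-2)`
vanishes at both ends of `[0, 1]`, and its derivative is
`((p + q) - ((a-1)p + aq)/(a-z)) m(z) - (r-2) z(1-z)(a-z)^(-2) m(z)`.
For `m = m_θ` we have `(a-1)p + aq = 2κ/β` and `p + q = (2κ/β) θ`, so integrating over `(0, 1)`
gives `(2κ/β) (∫ m_θ/(a-z) - θ c_θ) = -(r-2) ∫ z(1-z)(a-z)^(-2) m_θ`, of the sign of `β - α`.
-/

open MeasureTheory Set

lemma integrableOn_rpow_mul_one_sub_rpow_mul {s t : ℝ} (hs : -1 < s) (ht : -1 < t) {h : ℝ → ℝ}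
    (hh : ContinuousOn h (Icc 0 1)) :
    IntegrableOn (fun z => z ^ s * (1 - z) ^ t * h z) (Ioo 0 1) := by
  have hleft : IntegrableOn (fun z => z ^ s * (1 - z) ^ t * h z) (Icc 0 (1 / 2)) := by
    have hpow : IntegrableOn (fun z : ℝ => z ^ s) (Icc 0 (1 / 2)) := by
      rw [integrableOn_Icc_iff_integrableOn_Ioc]
      exact (intervalIntegral.intervalIntegrable_rpow' hs).1
    have hcont : ContinuousOn (fun z : ℝ => (1 - z) ^ t * h z) (Icc 0 (1 / 2)) :=
      ((continuousOn_const.sub continuousOn_id).rpow_const fun z hz =>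
        Or.inl (sub_pos.2 (by linarith [hz.2] : z < 1)).ne').mul
        (hh.mono (Icc_subset_Icc_right (by norm_num)))
    simpa only [mul_assoc] using hpow.mul_continuousOn hcont isCompact_Icc
  have hright : IntegrableOn (fun z => z ^ s * (1 - z) ^ t * h z) (Icc (1 / 2) 1) := by
    have hpow : IntegrableOn (fun z : ℝ => (1 - z) ^ t) (Icc (1 / 2) 1) := by
      have := ((intervalIntegral.intervalIntegrable_rpow' ht (a := 0) (b := 1 / 2)).comp_sub_left
        1).symm
      norm_num at this
      rw [integrableOn_Icc_iff_integrableOn_Ioc]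
      exact this.1
    have hcont : ContinuousOn (fun z : ℝ => z ^ s * h z) (Icc (1 / 2) 1) :=
      (continuousOn_id.rpow_const fun z hz => Or.inl (by linarith [hz.1] : (0:ℝ) < z).ne').mul
        (hh.mono (Icc_subset_Icc_left (by norm_num)))
    refine (hpow.mul_continuousOn hcont isCompact_Icc).congr_fun (fun z _ => ?_) measurableSet_Icc
    ring
  exact (hleft.union hright).mono_set fun z hz => by
    rcases le_total z (1 / 2) with h | h
    exacts [Or.inl ⟨hz.1.le, h⟩, Or.inr ⟨h, hz.2.le⟩]

/-- `m_θ` is `speedDensity a p q r` with `p = (2κ/β)(aθ-1)`, `q = (2κ/β)(1-θ(a-1))`,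
`r = 2α/β`. -/
noncomputable def speedDensity (a p q r z : ℝ) : ℝ :=
  z ^ (p - 1) * (1 - z) ^ (q - 1) * (a - z) ^ (r - 1)

section speedDensity

variable {a p q r : ℝ}

lemma speedDensity_pos {z : ℝ} (ha : 1 < a) (hz : z ∈ Ioo 0 1) : 0 < speedDensity a p q r z := by
  obtain ⟨hz0, hz1⟩ := hz
  unfold speedDensity
  have : 0 < 1 - z := by linarith
  have : 0 < a - z := by linarith
  positivity

lemma one_div_sub_mul_speedDensity {z : ℝ} (hz : z < a) :
    1 / (a - z) * speedDensity a p q r z = speedDensity a p q (r - 1) z := by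
  rw [speedDensity, speedDensity, Real.rpow_sub_one (sub_pos.2 hz).ne' (r - 1)]
  ring

lemma integrableOn_speedDensity (ha : 1 < a) (hp : 0 < p) (hq : 0 < q) :
    IntegrableOn (speedDensity a p q r) (Ioo 0 1) :=
  integrableOn_rpow_mul_one_sub_rpow_mul (by linarith) (by linarith)
    ((continuousOn_const.sub continuousOn_id).rpow_const fun z hz =>
      Or.inl (sub_pos.2 (by linarith [hz.2] : z < a)).ne')

lemma integral_speedDensity_pos (ha : 1 < a) (hp : 0 < p) (hq : 0 < q) :
    0 < ∫ z in Ioo 0 1, speedDensity a p q r z := by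
  rw [setIntegral_pos_iff_support_of_nonneg_ae
    ((ae_restrict_iff' measurableSet_Ioo).2 (ae_of_all _ fun z hz => (speedDensity_pos ha hz).le))
    (integrableOn_speedDensity ha hp hq)]
  calc (0 : ENNReal) < volume (Ioo (0 : ℝ) 1) := by simp
    _ ≤ _ := measure_mono fun z hz => show z ∈ _ ∩ _ from ⟨(speedDensity_pos ha hz).ne', hz⟩

lemma hasDerivAt_rpow_mul_one_sub_rpow_mul_sub_rpow {z : ℝ} (hz : z ∈ Ioo 0 1) (ha : 1 < a) :
    HasDerivAt (fun x => x ^ p * (1 - x) ^ q * (a - x) ^ (r - 2))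
      ((p + q) * speedDensity a p q r z -
        ((a - 1) * p + a * q) * (1 / (a - z) * speedDensity a p q r z) -
          (r - 2) * speedDensity a (p + 1) (q + 1) (r - 2) z) z := by
  obtain ⟨hz0, hz1⟩ := hz
  have h1z : 1 - z ≠ 0 := (sub_pos.2 hz1).ne'
  have haz : a - z ≠ 0 := (sub_pos.2 (hz1.trans ha)).ne'
  have hr : (a - z) ^ (r - 1) = (a - z) ^ (r - 2) * (a - z) := by
    rw [← Real.rpow_add_one haz]; ring_nf
  refine (((Real.hasDerivAt_rpow_const (p := p) (Or.inl hz0.ne')).mul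
    (((hasDerivAt_id z).const_sub 1).rpow_const (p := q) (Or.inl h1z))).mul
    (((hasDerivAt_id z).const_sub a).rpow_const (p := r - 2) (Or.inl haz))).congr_deriv ?_
  simp only [speedDensity, add_sub_cancel_right, id_eq, Pi.mul_apply, hr,
    Real.rpow_sub_one hz0.ne', Real.rpow_sub_one h1z, Real.rpow_sub_one haz]
  field_simp
  ring

lemma mul_integral_one_div_sub_mul_speedDensity (ha : 1 < a) (hp : 0 < p) (hq : 0 < q) :
    ((a - 1) * p + a * q) * ∫ z in Ioo 0 1, 1 / (a - z) * speedDensity a p q r z =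
      (p + q) * (∫ z in Ioo 0 1, speedDensity a p q r z) -
        (r - 2) * ∫ z in Ioo 0 1, speedDensity a (p + 1) (q + 1) (r - 2) z := by
  set F : ℝ → ℝ := fun x => x ^ p * (1 - x) ^ q * (a - x) ^ (r - 2)
  have hF : ContinuousOn F (Icc 0 1) :=
    ((continuousOn_id.rpow_const fun _ _ => Or.inr hp.le).mul
      ((continuousOn_const.sub continuousOn_id).rpow_const fun _ _ => Or.inr hq.le)).mul
      ((continuousOn_const.sub continuousOn_id).rpow_const fun z hz =>
        Or.inl (sub_pos.2 (by linarith [hz.2] : z < a)).ne')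
  have hw := integrableOn_speedDensity (r := r) ha hp hq
  have hw_div : IntegrableOn (fun z => 1 / (a - z) * speedDensity a p q r z) (Ioo 0 1) :=
    (integrableOn_speedDensity (r := r - 1) ha hp hq).congr_fun
      (fun z hz => (one_div_sub_mul_speedDensity (hz.2.trans ha)).symm) measurableSet_Ioo
  have hw_succ := integrableOn_speedDensity (r := r - 2) ha (by linarith : 0 < p + 1)
    (by linarith : 0 < q + 1)
  have hftc := intervalIntegral.integral_eq_sub_of_hasDerivAt_of_le zero_le_one hF
    (fun z hz => hasDerivAt_rpow_mul_one_sub_rpow_mul_sub_rpow hz ha)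
    ((intervalIntegrable_iff_integrableOn_Ioo_of_le zero_le_one).2
      (((hw.const_mul _).sub (hw_div.const_mul _)).sub (hw_succ.const_mul _)))
  have hF0 : F 0 = 0 := by simp [F, Real.zero_rpow hp.ne']
  have hF1 : F 1 = 0 := by simp [F, Real.zero_rpow hq.ne']
  rw [intervalIntegral.integral_of_le zero_le_one, integral_Ioc_eq_integral_Ioo, integral_sub,
    integral_sub, integral_const_mul, integral_const_mul, integral_const_mul, hF0, hF1] at hftc
  · linarith
  exacts [hw.const_mul _, hw_div.const_mul _, (hw.const_mul _).sub (hw_div.const_mul _),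
    hw_succ.const_mul _]

end speedDensity

theorem stmt_13_general (κ α β : ℝ) (hκ : 0 < κ) (hβ : 0 < β)
    (a : ℝ) (ha : 1 < a) (θ : ℝ) (hθ : θ ∈ Set.Ioo (1 / a) (1 / (a - 1))) :
    let mθ : ℝ → ℝ := fun z =>
      z ^ ((2 * κ / β) * (a * θ - 1) - 1) *
        (1 - z) ^ ((2 * κ / β) * (1 - θ * (a - 1)) - 1) *
        (a - z) ^ ((2 * α / β) - 1)
    let cθ := ∫ z in Set.Ioo (0 : ℝ) 1, mθ z
    (β < α → (1 / cθ) * ∫ z in Set.Ioo (0 : ℝ) 1, (1 / (a - z)) * mθ z < θ) ∧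
    (α = β → (1 / cθ) * ∫ z in Set.Ioo (0 : ℝ) 1, (1 / (a - z)) * mθ z = θ) ∧
    (α < β → θ < (1 / cθ) * ∫ z in Set.Ioo (0 : ℝ) 1, (1 / (a - z)) * mθ z) := by
  intro mθ cθ
  obtain ⟨hθa, hθa'⟩ := hθ
  set l := 2 * κ / β
  set p := l * (a * θ - 1)
  set q := l * (1 - θ * (a - 1))
  set r := 2 * α / β with hr_def
  have hl : 0 < l := by positivity
  have hp : 0 < p := mul_pos hl (by rw [div_lt_iff₀ (by linarith)] at hθa; linarith)
  have hq : 0 < q := mul_pos hl (by rw [lt_div_iff₀ (by linarith)] at hθa'; linarith)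
  have hc : 0 < cθ := integral_speedDensity_pos ha hp hq
  set K := ∫ z in Ioo 0 1, speedDensity a (p + 1) (q + 1) (r - 2) z
  have hK : 0 < K := integral_speedDensity_pos ha (by linarith) (by linarith)
  have key := mul_integral_one_div_sub_mul_speedDensity (r := r) ha hp hq
  rw [show (a - 1) * p + a * q = l by ring, show p + q = l * θ by ring] at key
  set I := ∫ z in Ioo 0 1, 1 / (a - z) * mθ z
  change l * I = l * θ * cθ - (r - 2) * K at key
  have hmean : 1 / cθ * I = θ - (r - 2) * K / (l * cθ) := by
    field_simp
    linarith
  have hr : r - 2 = 2 * (α - β) / β := by rw [hr_def]; field_simp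
  rw [hmean, hr]
  refine ⟨fun h => ?_, fun h => ?_, fun h => ?_⟩
  · have : 0 < 2 * (α - β) / β * K / (l * cθ) :=
      div_pos (mul_pos (div_pos (by linarith) hβ) hK) (mul_pos hl hc)
    linarith
  · simp [h]
  · have : 2 * (α - β) / β * K / (l * cθ) < 0 :=
      div_neg_of_neg_of_pos (mul_neg_of_neg_of_pos (div_neg_of_neg_of_pos (by linarith) hβ) hK)
        (mul_pos hl hc)
    linarith

/-- The mean of `1/(a-z)` under the normalized speed density `m_θ/c_θ` is
`< θ`, `= θ`, or `> θ` according to whether `α > β`, `α = β`, or `α < β`. -/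
theorem stmt_13 (κ α β : ℝ) (hκ : 0 < κ) (hα : 0 < α) (hβ : 0 < β)
    (a : ℝ) (ha : 1 < a) (θ : ℝ) (hθ : θ ∈ Set.Ioo (1 / a) (1 / (a - 1))) :
    let mθ : ℝ → ℝ := fun z =>
      z ^ ((2 * κ / β) * (a * θ - 1) - 1) *
        (1 - z) ^ ((2 * κ / β) * (1 - θ * (a - 1)) - 1) *
        (a - z) ^ ((2 * α / β) - 1)
    let cθ := ∫ z in Set.Ioo (0 : ℝ) 1, mθ z
    (β < α → (1 / cθ) * ∫ z in Set.Ioo (0 : ℝ) 1, (1 / (a - z)) * mθ z < θ) ∧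
    (α = β → (1 / cθ) * ∫ z in Set.Ioo (0 : ℝ) 1, (1 / (a - z)) * mθ z = θ) ∧
    (α < β → θ < (1 / cθ) * ∫ z in Set.Ioo (0 : ℝ) 1, (1 / (a - z)) * mθ z) :=
  stmt_13_general κ α β hκ hβ a ha θ hθ
end
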